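/- The Lin–Lu–Yau Ricci curvature on a strongly connected finite directed graph admits the limit-free representation κ(x,y) = inf over f ∈ F_{xy} of ∇_{xy} ℒf, where F_{xy} is the set of 1-Lipschitz functions f with ∇_{xy} f = 1. -/

import Mathlib

open Finset

variable {V : Type*} [Fintype V] [DecidableEq V]

/-- `π` is a coupling of `μ` and `ν`. -/
def IsCoupling (μ ν : V → ℝ) (π : V → V → ℝ) : Prop :=
  (∀ x y, 0 ≤ π x y) ∧ (∀ x, ∑ y, π x y = μ x) ∧ (∀ y, ∑ x, π x y = ν y)

/-- The L1-Wasserstein distance with cost `d`. -/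
noncomputable def W1 (d : V → V → ℝ) (μ ν : V → ℝ) : ℝ :=
  sInf {c | ∃ π, IsCoupling μ ν π ∧ c = ∑ x, ∑ y, π x y * d x y}

/-- The lazy distribution `μ_x^α`. -/
noncomputable def lazyDist (Pb : V → V → ℝ) (α : ℝ) (x : V) : V → ℝ :=
  fun z => if z = x then α else (1 - α) * Pb x z

/-- The `α`-Ricci curvature `κ_α(x,y) = 1 − W₁(μ_x^α, μ_y^α)/d(x,y)`. -/
noncomputable def kappaAlpha (d : V → V → ℝ) (Pb : V → V → ℝ) (α : ℝ) (x y : V) : ℝ :=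
  1 - W1 d (lazyDist Pb α x) (lazyDist Pb α y) / d x y

/-!
For `1/2 ≤ α < 1` the quotient `κ_α(x,y)/(1-α)` is already constant, equal to the infimum of
`∇_{xy} ℒf` over `F_{xy}`, so the one-sided limit is trivial. By Kantorovich duality,
`W₁(μ_x^α, μ_y^α)` is the maximum over 1-Lipschitz `f` of
`∑ f (μ_y^α - μ_x^α) = α (f y - f x) + (1-α) (P f y - P f x)`; for `α ≥ 1/2` raising `f` to
`max f (f x + d(x,y) - d(·,y))` does not lower this objective, so the maximum may be taken over
`F_{xy}`, where the objective is `d(x,y) (1 - (1-α) ∇_{xy} ℒf)`.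
Duality itself comes from Hahn–Banach applied to a transport cost with penalized marginals,
which is sublinear in the pair of marginals.
-/

theorem exists_linearMap_le_sublinear_eq {E : Type*} [AddCommGroup E] [Module ℝ E] (N : E → ℝ)
    (N_hom : ∀ c : ℝ, 0 < c → ∀ x, N (c • x) = c * N x) (N_add : ∀ x y, N (x + y) ≤ N x + N y)
    (x : E) : ∃ g : E →ₗ[ℝ] ℝ, (∀ y, g y ≤ N y) ∧ g x = N x := by
  have N_zero : N 0 = 0 := by
    have := N_hom 2 two_pos 0
    rw [smul_zero] at this
    linarith
  have H : ∀ c : ℝ, c • x = 0 → c • N x = 0 := by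
    intro c hc
    rcases (smul_eq_zero.1 hc) with rfl | rfl
    · exact zero_smul _ _
    · rw [N_zero, smul_zero]
  have hle : ∀ c : ℝ, c * N x ≤ N (c • x) := by
    intro c
    rcases lt_trichotomy c 0 with hc | rfl | hc
    · have := N_add (c • x) ((-c) • x)
      rw [← add_smul, add_neg_cancel, zero_smul, N_zero, N_hom _ (neg_pos.2 hc)] at this
      linarith
    · rw [zero_smul, zero_mul, N_zero]
    · exact (N_hom c hc x).ge
  obtain ⟨g, hg, hgN⟩ := exists_extension_of_le_sublinear
    (LinearPMap.mkSpanSingleton' x (N x) H) N N_hom N_add (by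
      rintro ⟨_, hz⟩
      obtain ⟨c, rfl⟩ := Submodule.mem_span_singleton.1 hz
      rw [LinearPMap.mkSpanSingleton'_apply, RingHom.id_apply, smul_eq_mul]
      exact hle c)
  have hx : x ∈ ℝ ∙ x := Submodule.mem_span_singleton_self x
  exact ⟨g, hgN, (hg ⟨x, hx⟩).trans (LinearPMap.mkSpanSingleton'_apply_self _ _ _ hx)⟩

def OneLipschitz (d : V → V → ℝ) (f : V → ℝ) : Prop :=
  ∀ u v, f v - f u ≤ d u v

def transportCost (d : V → V → ℝ) (π : V → V → ℝ) : ℝ :=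
  ∑ u, ∑ v, π u v * d u v

section

omit [DecidableEq V]

variable {d : V → V → ℝ} {μ ν : V → ℝ}

lemma W1_le_transportCost (hd : ∀ u v, 0 ≤ d u v) {π : V → V → ℝ} (hπ : IsCoupling μ ν π) :
    W1 d μ ν ≤ transportCost d π :=
  csInf_le ⟨0, by
    rintro _ ⟨γ, hγ, rfl⟩
    exact sum_nonneg fun u _ => sum_nonneg fun v _ => mul_nonneg (hγ.1 u v) (hd u v)⟩
    ⟨π, hπ, rfl⟩

lemma sum_mul_sub_eq_of_isCoupling {π : V → V → ℝ} (hπ : IsCoupling μ ν π) (f : V → ℝ) :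
    ∑ z, f z * (ν z - μ z) = ∑ u, ∑ v, π u v * (f v - f u) := by
  obtain ⟨-, hrow, hcol⟩ := hπ
  simp only [mul_sub, sum_sub_distrib]
  rw [sum_comm (f := fun u v => π u v * f v)]
  simp only [← sum_mul, hrow, hcol, mul_comm (f _)]

-- The missing mass is supplied by the product `r ⊗ c / s` of the row and column deficits.
lemma exists_isCoupling_transportCost_le {M : ℝ} (hM : ∀ u v, d u v ≤ M)
    (hμν : ∑ u, μ u = ∑ v, ν v) {τ : V → V → ℝ} (hτ : ∀ u v, 0 ≤ τ u v)
    (hrow : ∀ u, ∑ v, τ u v ≤ μ u) (hcol : ∀ v, ∑ u, τ u v ≤ ν v) :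
    ∃ γ, IsCoupling μ ν γ ∧
      transportCost d γ ≤ transportCost d τ + M * (∑ u, μ u - ∑ u, ∑ v, τ u v) := by
  set r : V → ℝ := fun u => μ u - ∑ v, τ u v
  set c : V → ℝ := fun v => ν v - ∑ u, τ u v
  have hr : ∀ u, 0 ≤ r u := fun u => sub_nonneg.2 (hrow u)
  have hc : ∀ v, 0 ≤ c v := fun v => sub_nonneg.2 (hcol v)
  set s := ∑ u, r u with hs
  have hs_eq : s = ∑ u, μ u - ∑ u, ∑ v, τ u v := sum_sub_distrib ..
  have hcs : ∑ v, c v = s := by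
    rw [hs_eq, sum_sub_distrib, sum_comm, hμν]
  -- if `s = 0` there is nothing to complete, and `x / 0 = 0` makes the formula below agree
  have cancel : ∀ {w : V → ℝ}, (∀ i, 0 ≤ w i) → ∑ j, w j = s → ∀ i, w i * s / s = w i := by
    intro w hw hws i
    by_cases h0 : s = 0
    · rw [(sum_eq_zero_iff_of_nonneg fun j _ => hw j).1 (hws.trans h0) i (mem_univ i),
        zero_mul, zero_div]
    · exact mul_div_cancel_right₀ _ h0
  refine ⟨fun u v => τ u v + r u * c v / s, ⟨fun u v => ?_, fun u => ?_, fun v => ?_⟩, ?_⟩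
  · exact add_nonneg (hτ u v) (div_nonneg (mul_nonneg (hr u) (hc v)) (sum_nonneg fun u _ => hr u))
  · rw [sum_add_distrib, ← sum_div, ← mul_sum, hcs, cancel hr hs.symm]
    simp [r]
  · rw [sum_add_distrib, ← sum_div, ← sum_mul, ← hs, mul_comm, cancel hc hcs]
    simp [c]
  · have hmass : ∑ u, ∑ v, r u * c v / s * d u v ≤ ∑ u, ∑ v, r u * c v / s * M :=
      sum_le_sum fun u _ => sum_le_sum fun v _ => mul_le_mul_of_nonneg_left (hM u v)
        (div_nonneg (mul_nonneg (hr u) (hc v)) (sum_nonneg fun u _ => hr u))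
    have htotal : ∑ u, ∑ v, r u * c v / s * M = M * s := by
      simp only [← sum_mul, ← sum_div, ← mul_sum, hcs, ← hs, mul_self_div_self, mul_comm]
    rw [← hs_eq]
    simp only [transportCost, add_mul, sum_add_distrib]
    linarith

lemma exists_isCoupling (hμ : ∀ u, 0 ≤ μ u) (hν : ∀ v, 0 ≤ ν v) (hμν : ∑ u, μ u = ∑ v, ν v) :
    ∃ γ, IsCoupling μ ν γ :=
  (exists_isCoupling_transportCost_le (d := 0) (M := 0) (τ := 0) (fun _ _ => le_rfl) hμν
    (fun _ _ => le_rfl) (by simpa using hμ) (by simpa using hν)).imp fun _ h => h.1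

lemma sum_mul_sub_le_W1 (hμ : ∀ u, 0 ≤ μ u) (hν : ∀ v, 0 ≤ ν v) (hμν : ∑ u, μ u = ∑ v, ν v)
    {f : V → ℝ} (hf : OneLipschitz d f) : ∑ z, f z * (ν z - μ z) ≤ W1 d μ ν := by
  obtain ⟨γ, hγ⟩ := exists_isCoupling hμ hν hμν
  refine le_csInf ⟨_, γ, hγ, rfl⟩ ?_
  rintro _ ⟨π, hπ, rfl⟩
  rw [sum_mul_sub_eq_of_isCoupling hπ]
  exact sum_le_sum fun u _ => sum_le_sum fun v _ => mul_le_mul_of_nonneg_left (hf u v) (hπ.1 u v)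

lemma exists_le_sum_eq_min {π : V → V → ℝ} (hπ : ∀ u v, 0 ≤ π u v) {w : V → ℝ}
    (hw : ∀ u, 0 ≤ w u) :
    ∃ σ : V → V → ℝ, (∀ u v, 0 ≤ σ u v ∧ σ u v ≤ π u v) ∧
      ∀ u, ∑ v, σ u v = min (∑ v, π u v) (w u) := by
  have hθ : ∀ u, 0 ≤ min 1 (w u / ∑ v, π u v) :=
    fun u => le_min zero_le_one (div_nonneg (hw u) (sum_nonneg fun v _ => hπ u v))
  refine ⟨fun u v => π u v * min 1 (w u / ∑ v, π u v), fun u v => ⟨?_, ?_⟩, fun u => ?_⟩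
  · exact mul_nonneg (hπ u v) (hθ u)
  · exact mul_le_of_le_one_right (hπ u v) (min_le_left _ _)
  · rw [← sum_mul, mul_min_of_nonneg _ _ (sum_nonneg fun v _ => hπ u v), mul_one]
    by_cases h0 : ∑ v, π u v = 0
    · simp [h0, hw u]
    · rw [mul_div_cancel₀ _ h0]

lemma exists_subcoupling {π : V → V → ℝ} (hπ : ∀ u v, 0 ≤ π u v) (hμ : ∀ u, 0 ≤ μ u)
    (hν : ∀ v, 0 ≤ ν v) :
    ∃ τ : V → V → ℝ, (∀ u v, 0 ≤ τ u v ∧ τ u v ≤ π u v) ∧ (∀ u, ∑ v, τ u v ≤ μ u) ∧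
      (∀ v, ∑ u, τ u v ≤ ν v) ∧
      ∑ v, ν v - ∑ u, ∑ v, τ u v ≤
        ∑ u, |∑ v, π u v - μ u| + ∑ v, |∑ u, π u v - ν v| := by
  obtain ⟨σ, hσ, hσrow⟩ := exists_le_sum_eq_min hπ hμ
  obtain ⟨τ, hτ, hτcol⟩ := exists_le_sum_eq_min (fun v u => (hσ u v).1) hν
  refine ⟨fun u v => τ v u, fun u v => ⟨(hτ v u).1, (hτ v u).2.trans (hσ u v).2⟩,
    fun u => ?_, fun v => (hτcol v).trans_le (min_le_right _ _), ?_⟩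
  · calc ∑ v, τ v u ≤ ∑ v, σ u v := sum_le_sum fun v _ => (hτ v u).2
      _ ≤ μ u := (hσrow u).trans_le (min_le_right _ _)
  · have hrow : ∑ v, ∑ u, π u v - ∑ v, ∑ u, σ u v ≤ ∑ u, |∑ v, π u v - μ u| := by
      rw [sum_comm (f := fun v u => π u v), sum_comm (f := fun v u => σ u v), ← sum_sub_distrib]
      have key (p q : ℝ) : p - min p q ≤ |p - q| := by grind [le_abs_self]
      exact sum_le_sum fun u _ => hσrow u ▸ key _ _
    have hcol : ∑ v, ν v - ∑ u, ∑ v, τ v u ≤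
        ∑ v, |∑ u, π u v - ν v| + (∑ v, ∑ u, π u v - ∑ v, ∑ u, σ u v) := by
      rw [sum_comm (f := fun u v => τ v u), ← sum_sub_distrib, ← sum_sub_distrib,
        ← sum_add_distrib]
      refine sum_le_sum fun v _ => ?_
      have key (p q c : ℝ) (hcp : c ≤ p) : q - min c q ≤ |p - q| + (p - c) := by
        grind [neg_abs_le]
      exact hτcol v ▸ key _ _ _ (sum_le_sum fun u _ => (hσ u v).2)
    linarith

def penalizedCost (d : V → V → ℝ) (M : ℝ) (a b : V → ℝ) (π : V → V → ℝ) : ℝ :=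
  transportCost d π + M * (∑ u, |∑ v, π u v - a u| + ∑ v, |∑ u, π u v - b v|)

-- Unlike `W1`, this infimum is finite for all `(a, b)` and sublinear in `(a, b)`, so Hahn–Banach
-- applies to it; on nonnegative vectors of equal mass it dominates `W1` once `M` bounds `d`.
noncomputable def penalizedW1 (d : V → V → ℝ) (M : ℝ) (a b : V → ℝ) : ℝ :=
  ⨅ π : {π : V → V → ℝ // 0 ≤ π}, penalizedCost d M a b π

lemma W1_le_penalizedCost (hd : ∀ u v, 0 ≤ d u v) {M : ℝ} (hM0 : 0 ≤ M)
    (hM : ∀ u v, d u v ≤ M) (hμ : ∀ u, 0 ≤ μ u) (hν : ∀ v, 0 ≤ ν v)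
    (hμν : ∑ u, μ u = ∑ v, ν v) {π : V → V → ℝ} (hπ : ∀ u v, 0 ≤ π u v) :
    W1 d μ ν ≤ penalizedCost d M μ ν π := by
  obtain ⟨τ, hτπ, hrow, hcol, hmass⟩ := exists_subcoupling hπ hμ hν
  obtain ⟨γ, hγ, hγcost⟩ :=
    exists_isCoupling_transportCost_le hM hμν (fun u v => (hτπ u v).1) hrow hcol
  have hcost : transportCost d τ ≤ transportCost d π :=
    sum_le_sum fun u _ => sum_le_sum fun v _ => mul_le_mul_of_nonneg_right (hτπ u v).2 (hd u v)
  calc W1 d μ ν ≤ transportCost d γ := W1_le_transportCost hd hγ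
    _ ≤ transportCost d τ + M * (∑ v, ν v - ∑ u, ∑ v, τ u v) := hμν ▸ hγcost
    _ ≤ penalizedCost d M μ ν π := add_le_add hcost (mul_le_mul_of_nonneg_left hmass hM0)

variable {M : ℝ}

lemma penalizedCost_nonneg (hd : ∀ u v, 0 ≤ d u v) (hM0 : 0 ≤ M) (a b : V → ℝ)
    {π : V → V → ℝ} (hπ : 0 ≤ π) : 0 ≤ penalizedCost d M a b π :=
  add_nonneg (sum_nonneg fun u _ => sum_nonneg fun v _ => mul_nonneg (hπ u v) (hd u v))
    (mul_nonneg hM0 (add_nonneg (sum_nonneg fun _ _ => abs_nonneg _)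
      (sum_nonneg fun _ _ => abs_nonneg _)))

lemma penalizedW1_le (hd : ∀ u v, 0 ≤ d u v) (hM0 : 0 ≤ M) (a b : V → ℝ) {π : V → V → ℝ}
    (hπ : 0 ≤ π) : penalizedW1 d M a b ≤ penalizedCost d M a b π := by
  refine ciInf_le ⟨0, ?_⟩ (⟨π, hπ⟩ : {π : V → V → ℝ // 0 ≤ π})
  rintro _ ⟨σ, rfl⟩
  exact penalizedCost_nonneg hd hM0 a b σ.2

lemma W1_le_penalizedW1 (hd : ∀ u v, 0 ≤ d u v) (hM0 : 0 ≤ M) (hM : ∀ u v, d u v ≤ M)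
    (hμ : ∀ u, 0 ≤ μ u) (hν : ∀ v, 0 ≤ ν v) (hμν : ∑ u, μ u = ∑ v, ν v) :
    W1 d μ ν ≤ penalizedW1 d M μ ν :=
  le_ciInf fun π => W1_le_penalizedCost hd hM0 hM hμ hν hμν π.2

lemma penalizedCost_add_le (hM0 : 0 ≤ M) (a a' b b' : V → ℝ) (π π' : V → V → ℝ) :
    penalizedCost d M (a + a') (b + b') (π + π') ≤
      penalizedCost d M a b π + penalizedCost d M a' b' π' := by
  have hcost : transportCost d (π + π') = transportCost d π + transportCost d π' := by
    simp only [transportCost, Pi.add_apply, add_mul, sum_add_distrib]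
  have hsplit (p p' q q' : ℝ) : |p + p' - (q + q')| ≤ |p - q| + |p' - q'| := by
    rw [add_sub_add_comm]; exact abs_add_le _ _
  have hrow : ∑ u, |∑ v, (π + π') u v - (a + a') u| ≤
      ∑ u, |∑ v, π u v - a u| + ∑ u, |∑ v, π' u v - a' u| := by
    rw [← sum_add_distrib]
    exact sum_le_sum fun u _ => by simpa only [Pi.add_apply, sum_add_distrib] using hsplit ..
  have hcol : ∑ v, |∑ u, (π + π') u v - (b + b') v| ≤
      ∑ v, |∑ u, π u v - b v| + ∑ v, |∑ u, π' u v - b' v| := by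
    rw [← sum_add_distrib]
    exact sum_le_sum fun v _ => by simpa only [Pi.add_apply, sum_add_distrib] using hsplit ..
  unfold penalizedCost
  rw [hcost]
  nlinarith [mul_le_mul_of_nonneg_left (add_le_add hrow hcol) hM0]

lemma penalizedW1_add_le (hd : ∀ u v, 0 ≤ d u v) (hM0 : 0 ≤ M) (a a' b b' : V → ℝ) :
    penalizedW1 d M (a + a') (b + b') ≤ penalizedW1 d M a b + penalizedW1 d M a' b' :=
  le_ciInf_add_ciInf fun π π' => (penalizedW1_le hd hM0 _ _ (add_nonneg π.2 π'.2)).trans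
    (penalizedCost_add_le hM0 a a' b b' π π')

lemma penalizedCost_smul {c : ℝ} (hc : 0 ≤ c) (a b : V → ℝ) (π : V → V → ℝ) :
    penalizedCost d M (c • a) (c • b) (c • π) = c * penalizedCost d M a b π := by
  have habs (p q : ℝ) : |c * p - c * q| = c * |p - q| := by
    rw [← mul_sub, abs_mul, abs_of_nonneg hc]
  simp only [penalizedCost, transportCost, Pi.smul_apply, smul_eq_mul, mul_assoc, ← mul_sum, habs]
  ring_nf

lemma penalizedW1_smul_le (hd : ∀ u v, 0 ≤ d u v) (hM0 : 0 ≤ M) {c : ℝ} (hc : 0 ≤ c)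
    (a b : V → ℝ) : penalizedW1 d M (c • a) (c • b) ≤ c * penalizedW1 d M a b := by
  unfold penalizedW1
  rw [Real.mul_iInf_of_nonneg hc]
  exact le_ciInf fun π => (penalizedW1_le hd hM0 _ _ (smul_nonneg hc π.2)).trans_eq
    (penalizedCost_smul hc a b π)

lemma penalizedW1_smul (hd : ∀ u v, 0 ≤ d u v) (hM0 : 0 ≤ M) {c : ℝ} (hc : 0 < c)
    (a b : V → ℝ) : penalizedW1 d M (c • a) (c • b) = c * penalizedW1 d M a b := by
  refine (penalizedW1_smul_le hd hM0 hc.le a b).antisymm ?_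
  have h := penalizedW1_smul_le hd hM0 (inv_nonneg.2 hc.le) (c • a) (c • b)
  rw [inv_smul_smul₀ hc.ne', inv_smul_smul₀ hc.ne'] at h
  rwa [← le_div_iff₀' hc, div_eq_inv_mul]

lemma exists_oneLipschitz_of_add_le [Nonempty V] (hrefl : ∀ u, d u u = 0)
    (htri : ∀ u v w, d u w ≤ d u v + d v w) {φ ψ : V → ℝ} (h : ∀ u v, φ u + ψ v ≤ d u v) :
    ∃ f, OneLipschitz d f ∧ (∀ u, φ u ≤ -f u) ∧ ∀ v, ψ v ≤ f v := by
  set f : V → ℝ := fun v => ⨅ u, (d u v - φ u)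
  have hf_le : ∀ u v, f v ≤ d u v - φ u := fun u v => ciInf_le (Set.finite_range _).bddBelow u
  refine ⟨f, fun u v => ?_, fun u => ?_, fun v => le_ciInf fun u => ?_⟩
  · obtain ⟨w, hw⟩ := exists_eq_ciInf_of_finite (f := fun w => d w u - φ w)
    linarith [hf_le w v, htri w u v, hw]
  · linarith [hf_le u u, hrefl u]
  · linarith [h u v]

omit [Fintype V] in
lemma OneLipschitz.max_sub (htri : ∀ u v w, d u w ≤ d u v + d v w) {f : V → ℝ}
    (hf : OneLipschitz d f) (c : ℝ) (y : V) :
    OneLipschitz d fun v => max (f v) (c - d v y) := fun u v => by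
  have := htri u v y
  rw [sub_le_iff_le_add]
  exact max_le (by linarith [hf u v, le_max_left (f u) (c - d u y)])
    (by linarith [le_max_right (f u) (c - d u y)])

-- `g = max f (f x + d x y - d · y)` gains `α δ` at `y`, with `δ = f x + d x y - f y`, and loses
-- at most `(1 - α) δ` through the averages, since `f ≤ g ≤ f + δ`.
lemma exists_oneLipschitz_sub_eq_and_le {Pb : V → V → ℝ} {α : ℝ} (hrefl : ∀ u, d u u = 0)
    (htri : ∀ u v w, d u w ≤ d u v + d v w) (hPnn : ∀ u v, 0 ≤ Pb u v)
    (hProw : ∀ u, ∑ v, Pb u v = 1) (hα : 1 / 2 ≤ α) (hα1 : α ≤ 1) {f : V → ℝ}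
    (hf : OneLipschitz d f) (x y : V) :
    ∃ g, OneLipschitz d g ∧ g y - g x = d x y ∧
      α * (f y - f x) + (1 - α) * (∑ u, Pb y u * f u - ∑ u, Pb x u * f u) ≤
        α * (g y - g x) + (1 - α) * (∑ u, Pb y u * g u - ∑ u, Pb x u * g u) := by
  set δ := f x + d x y - f y
  set g : V → ℝ := fun v => max (f v) (f x + d x y - d v y)
  have hδ : 0 ≤ δ := by linarith [hf x y]
  have hfg : ∀ v, f v ≤ g v := fun v => le_max_left _ _
  have hgf : ∀ v, g v ≤ f v + δ := fun v => max_le (by linarith) (by linarith [hf v y])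
  have hgx : g x = f x := by simp [g]
  have hgy : g y = f x + d x y := by
    simp only [g, hrefl, sub_zero]
    exact max_eq_right (by linarith [hf x y])
  have hPy : 0 ≤ ∑ u, Pb y u * g u - ∑ u, Pb y u * f u := by
    rw [← sum_sub_distrib]
    exact sum_nonneg fun u _ => by rw [← mul_sub]; exact mul_nonneg (hPnn y u) (by linarith [hfg u])
  have hPx : ∑ u, Pb x u * g u - ∑ u, Pb x u * f u ≤ δ := by
    rw [← sum_sub_distrib, ← one_mul δ, ← hProw x, sum_mul]
    exact sum_le_sum fun u _ => by
      rw [← mul_sub]; exact mul_le_mul_of_nonneg_left (by linarith [hgf u]) (hPnn x u)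
  refine ⟨g, hf.max_sub htri _ y, by rw [hgx, hgy]; ring, ?_⟩
  rw [hgx, hgy]
  nlinarith [mul_nonneg (sub_nonneg.2 hα1) hPy, mul_nonneg (sub_nonneg.2 hα1) (sub_nonneg.2 hPx),
    mul_nonneg (by linarith : 0 ≤ 2 * α - 1) hδ]

end

section Duality

variable {d : V → V → ℝ}

lemma penalizedW1_single_le (hd : ∀ u v, 0 ≤ d u v) {M : ℝ} (hM0 : 0 ≤ M) (u v : V) :
    penalizedW1 d M (Pi.single u 1) (Pi.single v 1) ≤ d u v := by
  set π : V → V → ℝ := fun p q => (Pi.single u 1 : V → ℝ) p * (Pi.single v 1 : V → ℝ) q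
  have hsingle (w p : V) : 0 ≤ (Pi.single w 1 : V → ℝ) p := by
    rw [Pi.single_apply]; split_ifs <;> norm_num
  have hπ : 0 ≤ π := fun p q => mul_nonneg (hsingle u p) (hsingle v q)
  refine (penalizedW1_le hd hM0 _ _ hπ).trans_eq ?_
  simp [π, penalizedCost, transportCost, Pi.single_apply]

lemma LinearMap.apply_prod_eq_sum (g : (V → ℝ) × (V → ℝ) →ₗ[ℝ] ℝ) (a b : V → ℝ) :
    g (a, b) = ∑ u, a u * g (Pi.single u 1, 0) + ∑ v, b v * g (0, Pi.single v 1) := by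
  have hab : (a, b) = LinearMap.inl ℝ _ _ (∑ u, a u • Pi.single u 1) +
      LinearMap.inr ℝ _ _ (∑ v, b v • Pi.single v 1) := by
    rw [← pi_eq_sum_univ' a, ← pi_eq_sum_univ' b]; simp
  rw [hab, map_add]
  simp only [map_sum, map_smul, smul_eq_mul, LinearMap.inl_apply, LinearMap.inr_apply]

/-- Kantorovich duality. A supporting linear functional of `penalizedW1 d M` at `(μ, ν)` is a pair
of potentials `(φ, ψ)` with `φ u + ψ v ≤ d u v`, and its `d`-transform is the required `f`. -/
theorem exists_oneLipschitz_W1_le [Nonempty V] (hd : ∀ u v, 0 ≤ d u v) (hrefl : ∀ u, d u u = 0)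
    (htri : ∀ u v w, d u w ≤ d u v + d v w) {μ ν : V → ℝ} (hμ : ∀ u, 0 ≤ μ u)
    (hν : ∀ v, 0 ≤ ν v) (hμν : ∑ u, μ u = ∑ v, ν v) :
    ∃ f, OneLipschitz d f ∧ W1 d μ ν ≤ ∑ z, f z * (ν z - μ z) := by
  obtain ⟨M, hM⟩ := Finite.exists_le fun p : V × V => d p.1 p.2
  have hM0 : 0 ≤ M := (hd _ _).trans (hM (Classical.arbitrary _))
  obtain ⟨g, hgN, hg⟩ := exists_linearMap_le_sublinear_eq (fun p => penalizedW1 d M p.1 p.2)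
    (fun c hc p => by simpa only [Prod.smul_fst, Prod.smul_snd] using
      penalizedW1_smul hd hM0 hc p.1 p.2)
    (fun p q => by simpa only [Prod.fst_add, Prod.snd_add] using
      penalizedW1_add_le hd hM0 p.1 q.1 p.2 q.2) (μ, ν)
  have hφψ : ∀ u v, g (Pi.single u 1, 0) + g (0, Pi.single v 1) ≤ d u v := fun u v => by
    rw [← map_add, Prod.mk_add_mk, add_zero, zero_add]
    exact (hgN _).trans (penalizedW1_single_le hd hM0 u v)
  obtain ⟨f, hf, hφf, hψf⟩ := exists_oneLipschitz_of_add_le hrefl htri hφψ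
  refine ⟨f, hf, ?_⟩
  calc W1 d μ ν ≤ penalizedW1 d M μ ν := W1_le_penalizedW1 hd hM0 (fun u v => hM (u, v)) hμ hν hμν
    _ = ∑ u, μ u * g (Pi.single u 1, 0) + ∑ v, ν v * g (0, Pi.single v 1) :=
      hg.symm.trans (g.apply_prod_eq_sum μ ν)
    _ ≤ ∑ u, μ u * -f u + ∑ v, ν v * f v :=
      add_le_add (sum_le_sum fun u _ => mul_le_mul_of_nonneg_left (hφf u) (hμ u))
        (sum_le_sum fun v _ => mul_le_mul_of_nonneg_left (hψf v) (hν v))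
    _ = ∑ z, f z * (ν z - μ z) := by
      rw [← sum_add_distrib]; exact sum_congr rfl fun z _ => by ring

end Duality

section LazyWalk

variable {d Pb : V → V → ℝ} {α : ℝ}

omit [Fintype V] in
lemma lazyDist_nonneg (hPnn : ∀ u v, 0 ≤ Pb u v) (hα0 : 0 ≤ α) (hα1 : α ≤ 1) (x z : V) :
    0 ≤ lazyDist Pb α x z := by
  unfold lazyDist
  split_ifs
  exacts [hα0, mul_nonneg (sub_nonneg.2 hα1) (hPnn x z)]

lemma sum_mul_lazyDist {x : V} (hPx : Pb x x = 0) (f : V → ℝ) :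
    ∑ z, f z * lazyDist Pb α x z = α * f x + (1 - α) * ∑ z, Pb x z * f z := by
  have h : ∀ z, f z * lazyDist Pb α x z =
      α * (if z = x then f z else 0) + (1 - α) * (Pb x z * f z) := fun z => by
    unfold lazyDist; split_ifs with hz <;> simp [hz, hPx] <;> ring
  simp only [h, sum_add_distrib, ← mul_sum, sum_ite_eq', mem_univ, if_true]

lemma sum_lazyDist {x : V} (hPx : Pb x x = 0) (hProw : ∑ z, Pb x z = 1) :
    ∑ z, lazyDist Pb α x z = 1 := by
  simpa [hProw] using sum_mul_lazyDist (α := α) hPx 1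

end LazyWalk

def gradLaplacianSet (d Pb : V → V → ℝ) (x y : V) : Set ℝ :=
  {r | ∃ f : V → ℝ, OneLipschitz d f ∧ (f y - f x) / d x y = 1 ∧
    r = ((f y - ∑ u, Pb y u * f u) - (f x - ∑ u, Pb x u * f u)) / d x y}

theorem isLeast_gradLaplacianSet {d Pb : V → V → ℝ} (hnn : ∀ x y, 0 ≤ d x y)
    (hrefl : ∀ x, d x x = 0) (htri : ∀ x y z, d x z ≤ d x y + d y z)
    (hPnn : ∀ x y, 0 ≤ Pb x y) (hProw : ∀ x, ∑ y, Pb x y = 1) (hPdiag : ∀ x, Pb x x = 0)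
    {x y : V} (hd : 0 < d x y) {α : ℝ} (hα : 1 / 2 ≤ α) (hα1 : α < 1) :
    IsLeast (gradLaplacianSet d Pb x y) (kappaAlpha d Pb α x y / (1 - α)) := by
  have : Nonempty V := ⟨x⟩
  have ht : 0 < 1 - α := sub_pos.2 hα1
  set W := W1 d (lazyDist Pb α x) (lazyDist Pb α y)
  have hκ : kappaAlpha d Pb α x y = 1 - W / d x y := rfl
  have hdual : ∀ f : V → ℝ, ∑ z, f z * (lazyDist Pb α y z - lazyDist Pb α x z) =
      α * (f y - f x) + (1 - α) * (∑ u, Pb y u * f u - ∑ u, Pb x u * f u) := fun f => by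
    simp only [mul_sub, sum_sub_distrib, sum_mul_lazyDist (hPdiag _)]; ring
  have hμ := lazyDist_nonneg hPnn (by linarith) hα1.le x
  have hν := lazyDist_nonneg hPnn (by linarith) hα1.le y
  have hμν : ∑ u, lazyDist Pb α x u = ∑ v, lazyDist Pb α y v := by
    rw [sum_lazyDist (hPdiag x) (hProw x), sum_lazyDist (hPdiag y) (hProw y)]
  have hle_W : ∀ f, OneLipschitz d f →
      α * (f y - f x) + (1 - α) * (∑ u, Pb y u * f u - ∑ u, Pb x u * f u) ≤ W :=
    fun f hf => hdual f ▸ sum_mul_sub_le_W1 hμ hν hμν hf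
  constructor
  · obtain ⟨f, hf, hWf⟩ := exists_oneLipschitz_W1_le hnn hrefl htri hμ hν hμν
    obtain ⟨g, hg, hgxy, hfg⟩ :=
      exists_oneLipschitz_sub_eq_and_le hrefl htri hPnn hProw hα hα1.le hf x y
    have hWg := le_antisymm (hle_W g hg) ((hdual f ▸ hWf).trans hfg)
    refine ⟨g, hg, by rw [hgxy, div_self hd.ne'], ?_⟩
    rw [hκ, ← hWg, hgxy]
    field_simp
    linear_combination (α - 1) * hgxy
  · rintro _ ⟨f, hf, hfxy, rfl⟩
    rw [div_eq_one_iff_eq hd.ne'] at hfxy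
    have := hle_W f hf
    rw [hκ, div_le_div_iff₀ ht hd, one_sub_div hd.ne', div_mul_eq_mul_div, div_le_iff₀ hd]
    nlinarith

theorem LLY_limit_free_general (d : V → V → ℝ)
    (hnn : ∀ x y, 0 ≤ d x y)
    (hrefl : ∀ x, d x x = 0)
    (htri : ∀ x y z, d x z ≤ d x y + d y z)
    (Pb : V → V → ℝ) (hPnn : ∀ x y, 0 ≤ Pb x y) (hProw : ∀ x, ∑ y, Pb x y = 1)
    (hPdiag : ∀ x, Pb x x = 0)
    (x y : V) (hd : 0 < d x y) :
    Filter.Tendsto (fun α => kappaAlpha d Pb α x y / (1 - α))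
      (nhdsWithin 1 (Set.Iio 1))
      (nhds (sInf {r | ∃ f : V → ℝ,
        (∀ u v, f v - f u ≤ d u v) ∧ (f y - f x) / d x y = 1 ∧
        r = ((f y - ∑ u, Pb y u * f u) - (f x - ∑ u, Pb x u * f u)) / d x y})) := by
  refine tendsto_nhds_of_eventually_eq ?_
  filter_upwards [Ico_mem_nhdsLT (by norm_num : (1 / 2 : ℝ) < 1)] with α hα
  exact (isLeast_gradLaplacianSet hnn hrefl htri hPnn hProw hPdiag hd hα.1 hα.2).csInf_eq.symm

/-- Limit-free representation of the Lin–Lu–Yau curvature: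
`κ(x,y) = lim_{α→1⁻} κ_α(x,y)/(1−α)` exists and equals
`inf { ∇_{xy} ℒf : f 1-Lipschitz, ∇_{xy} f = 1 }`. -/
theorem LLY_limit_free [Nonempty V] (d : V → V → ℝ)
    (hnn : ∀ x y, 0 ≤ d x y)
    (hrefl : ∀ x, d x x = 0)
    (htri : ∀ x y z, d x z ≤ d x y + d y z)
    (Pb : V → V → ℝ) (hPnn : ∀ x y, 0 ≤ Pb x y) (hProw : ∀ x, ∑ y, Pb x y = 1)
    (hPdiag : ∀ x, Pb x x = 0)
    (x y : V) (hxy : x ≠ y) (hd : 0 < d x y) :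
    Filter.Tendsto (fun α => kappaAlpha d Pb α x y / (1 - α))
      (nhdsWithin 1 (Set.Iio 1))
      (nhds (sInf {r | ∃ f : V → ℝ,
        (∀ u v, f v - f u ≤ d u v) ∧ (f y - f x) / d x y = 1 ∧
        r = ((f y - ∑ u, Pb y u * f u) - (f x - ∑ u, Pb x u * f u)) / d x y})) :=
  LLY_limit_free_general d hnn hrefl htri Pb hPnn hProw hPdiag x y hd
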